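/- arXiv:2406.00685 — 4 statements merged into one kernel-verified Lean document; each statement's English description precedes it below -/
import Mathlib

section
/- Let f(x) = ∑_{i=1}^d w_i x_i + b be a linear model on ℝ^d, x ∈ ℝ^d, y ∈ ℝ, and per-coordinate budgets ε_i ≥ 0. Then the supremum of the square loss L(Δ) = (y - f(x + Δ))² over the perturbation box B(ε) = {Δ : |Δ_i| ≤ ε_i for all i} equals (|y - f(x)| + ∑_{i=1}^d |w_i| ε_i)², and this supremum is attained at some Δ* ∈ B(ε). -/
/-- For a linear model `f x = ∑ i, w i * x i + b`, the supremum of the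
square loss `Δ ↦ (y - f (x + Δ))^2` over the box `{Δ | ∀ i, |Δ i| ≤ ε i}` equals
`(|y - f x| + ∑ i, |w i| * ε i)^2` and is attained. -/
theorem stmt_0 (d : ℕ) (w x : Fin d → ℝ) (b y : ℝ) (ε : Fin d → ℝ)
    (hε : ∀ i, 0 ≤ ε i) :
    IsGreatest
      ((fun Δ : Fin d → ℝ => (y - (∑ i, w i * (x i + Δ i) + b)) ^ 2) ''
        {Δ : Fin d → ℝ | ∀ i, |Δ i| ≤ ε i})
      ((|y - (∑ i, w i * x i + b)| + ∑ i, |w i| * ε i) ^ 2) := by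
  set r : ℝ := y - (∑ i, w i * x i + b) with hr
  set s : ℝ := if 0 ≤ r then 1 else -1 with hs
  have hs1 : |s| = 1 := by
    rcases le_or_gt 0 r with h | h
    · simp [hs, if_pos h]
    · simp [hs, if_neg (not_le.mpr h)]
  have key : ∀ Δ : Fin d → ℝ,
      (y - (∑ i, w i * (x i + Δ i) + b)) = r - ∑ i, w i * Δ i := by
    intro Δ
    simp only [hr, mul_add, Finset.sum_add_distrib]
    ring
  constructor
  · refine ⟨fun i => -s * Real.sign (w i) * ε i, fun i => ?_, ?_⟩
    · have : |(-s * Real.sign (w i) * ε i)| = |s| * |Real.sign (w i)| * ε i := by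
        rw [abs_mul, abs_mul, abs_neg, abs_of_nonneg (hε i)]
      rw [this, hs1, one_mul]
      rcases lt_trichotomy (w i) 0 with h | h | h <;>
        simp [Real.sign_of_neg, Real.sign_of_pos, h, hε i]
    · have hsum : ∑ i, w i * (-s * Real.sign (w i) * ε i) = -s * ∑ i, |w i| * ε i := by
        rw [Finset.mul_sum]
        refine Finset.sum_congr rfl fun i _ => ?_
        have : w i * Real.sign (w i) = |w i| := by
          rcases lt_trichotomy (w i) 0 with h | h | h
          · rw [Real.sign_of_neg h, abs_of_neg h]; ring
          · simp [h]
          · rw [Real.sign_of_pos h, abs_of_pos h]; ring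
        calc w i * (-s * Real.sign (w i) * ε i)
            = -s * ((w i * Real.sign (w i)) * ε i) := by ring
          _ = -s * (|w i| * ε i) := by rw [this]
      show (y - (∑ i, w i * (x i + (fun i => -s * Real.sign (w i) * ε i) i) + b)) ^ 2 = _
      rw [key, hsum]
      rcases le_or_gt 0 r with h | h
      · have hs' : s = 1 := if_pos h
        rw [hs', abs_of_nonneg h]; ring_nf
      · have hs' : s = -1 := if_neg (not_le.mpr h)
        rw [hs', abs_of_neg h]; ring_nf
  · rintro v ⟨Δ, hΔ, rfl⟩
    simp only
    rw [key]
    have h1 : |r - ∑ i, w i * Δ i| ≤ |r| + ∑ i, |w i| * ε i := by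
      calc |r - ∑ i, w i * Δ i| ≤ |r| + |∑ i, w i * Δ i| := abs_sub _ _
        _ ≤ |r| + ∑ i, |w i * Δ i| := by
            gcongr; exact Finset.abs_sum_le_sum_abs _ _
        _ ≤ |r| + ∑ i, |w i| * ε i := by
            gcongr with i
            rw [abs_mul]
            exact mul_le_mul_of_nonneg_left (hΔ i) (abs_nonneg _)
    calc (r - ∑ i, w i * Δ i) ^ 2 = |r - ∑ i, w i * Δ i| ^ 2 := (sq_abs _).symm
      _ ≤ (|r| + ∑ i, |w i| * ε i) ^ 2 := by
          exact pow_le_pow_left₀ (abs_nonneg _) h1 2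
end

section
/- Assume ω₁ ≠ 0, ω₂ ≠ 0, ε₁ > 0 and ε₂ > 0. If (δ₁*, δ₂*) lies in the box {(δ₁, δ₂) : |δ₁| ≤ ε₁, |δ₂| ≤ ε₂} and L(δ₁*, δ₂*) ≥ L(δ₁, δ₂) for all (δ₁, δ₂) in the box, then |δ₁*| = ε₁ and |δ₂*| = ε₂; that is, every global maximizer of the adversarial square loss has both budget constraints active. -/
lemma aux_tight (ω ε δs u : ℝ) (hω : ω ≠ 0) (hε : 0 < ε) (hmem : |δs| ≤ ε)
    (h : ∀ δ : ℝ, |δ| ≤ ε → (u - ω * (δ - δs)) ^ 2 ≤ u ^ 2) : |δs| = ε := by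
  by_contra hne
  have hlt : |δs| < ε := lt_of_le_of_ne hmem hne
  set t : ℝ := ε - |δs| with ht
  have htpos : 0 < t := by simp [ht]; linarith
  set s : ℝ := if 0 ≤ u * ω then -t else t with hs
  have habs : |s| = t := by
    rcases le_or_gt 0 (u * ω) with h1 | h1
    · simp [hs, h1, abs_of_pos htpos]
    · simp [hs, not_le.mpr h1, abs_of_pos htpos]
  have hmem' : |δs + s| ≤ ε := by
    calc |δs + s| ≤ |δs| + |s| := abs_add_le _ _
    _ = ε := by rw [habs]; ring
  have := h (δs + s) hmem'
  have hkey : u * ω * s ≤ 0 := by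
    rcases le_or_gt 0 (u * ω) with h1 | h1
    · simp [hs, h1]; positivity
    · simp [hs, not_le.mpr h1]; nlinarith
  have hs2 : 0 < ω ^ 2 * s ^ 2 := by
    have : s ≠ 0 := by intro h0; rw [h0] at habs; simp at habs; linarith
    positivity
  nlinarith [this]

/-- If `ω₁ ≠ 0`, `ω₂ ≠ 0`, `ε₁ > 0`, `ε₂ > 0` and `(δ₁*, δ₂*)` is a
global maximizer of the square loss over the box, then both budget constraints are
active: `|δ₁*| = ε₁` and `|δ₂*| = ε₂`. -/
theorem stmt_7 (ω1 ω2 b x1 x2 y ε1 ε2 δ1s δ2s : ℝ)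
    (hω1 : ω1 ≠ 0) (hω2 : ω2 ≠ 0) (hε1 : 0 < ε1) (hε2 : 0 < ε2)
    (hmem1 : |δ1s| ≤ ε1) (hmem2 : |δ2s| ≤ ε2)
    (hmax : ∀ δ1 δ2 : ℝ, |δ1| ≤ ε1 → |δ2| ≤ ε2 →
      (y - (ω1 * (x1 + δ1) + ω2 * (x2 + δ2) + b)) ^ 2
        ≤ (y - (ω1 * (x1 + δ1s) + ω2 * (x2 + δ2s) + b)) ^ 2) :
    |δ1s| = ε1 ∧ |δ2s| = ε2 := by
  set u : ℝ := y - (ω1 * (x1 + δ1s) + ω2 * (x2 + δ2s) + b) with hu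
  constructor
  · apply aux_tight ω1 ε1 δ1s u hω1 hε1 hmem1
    intro δ hδ
    have := hmax δ δ2s hδ hmem2
    calc (u - ω1 * (δ - δ1s)) ^ 2
        = (y - (ω1 * (x1 + δ) + ω2 * (x2 + δ2s) + b)) ^ 2 := by rw [hu]; ring
      _ ≤ u ^ 2 := this
  · apply aux_tight ω2 ε2 δ2s u hω2 hε2 hmem2
    intro δ hδ
    have := hmax δ1s δ hmem1 hδ
    calc (u - ω2 * (δ - δ2s)) ^ 2
        = (y - (ω1 * (x1 + δ1s) + ω2 * (x2 + δ) + b)) ^ 2 := by rw [hu]; ring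
      _ ≤ u ^ 2 := this
end

section
/- Let f(x) = ∑_{i=1}^d w_i x_i + b be a linear model on ℝ^d, x ∈ ℝ^d, y ∈ ℝ with y ≠ f(x), and ε ≥ 0. Define the single-step (FGSM-type) perturbation Δ* by Δ*_i = ε · sign(g_i), where g = -2(y - f(x)) w is the gradient of the square loss Δ ↦ (y - f(x + Δ))² at Δ = 0 (equivalently Δ*_i = -ε · sign(y - f(x)) · sign(w_i)). Then ‖Δ*‖_∞ ≤ ε and (y - f(x + Δ*))² = (|y - f(x)| + ε ∑_{i=1}^d |w_i|)², i.e., Δ* maximizes the square loss over the ℓ∞ ball {Δ : ‖Δ‖_∞ ≤ ε}. -/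
/-- For a linear model with `y ≠ f x` and `ε ≥ 0`, the single-step
(FGSM-type) perturbation `Δ* i = ε · sign(g i)` with `g = -2(y - f x) w` (the gradient
of the square loss at `Δ = 0`) satisfies `‖Δ*‖_∞ ≤ ε` and achieves square loss
`(|y - f x| + ε ∑ i, |w i|)²`, i.e. it maximizes the square loss over the ℓ∞ ball. -/
theorem stmt_12 (d : ℕ) (w x : Fin d → ℝ) (b y ε : ℝ) (hε : 0 ≤ ε)
    (hy : y ≠ ∑ i, w i * x i + b)
    (Δs : Fin d → ℝ)
    (hΔs : ∀ i, Δs i = ε * Real.sign (-2 * (y - (∑ j, w j * x j + b)) * w i)) :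
    ‖Δs‖ ≤ ε ∧
    (y - (∑ i, w i * (x i + Δs i) + b)) ^ 2
      = (|y - (∑ i, w i * x i + b)| + ε * ∑ i, |w i|) ^ 2 ∧
    (∀ Δ : Fin d → ℝ, ‖Δ‖ ≤ ε →
      (y - (∑ i, w i * (x i + Δ i) + b)) ^ 2
        ≤ (y - (∑ i, w i * (x i + Δs i) + b)) ^ 2) := by
  set r : ℝ := y - (∑ i, w i * x i + b) with hr
  have hr0 : r ≠ 0 := sub_ne_zero.mpr hy
  -- each |Δs i| ≤ ε
  have habs : ∀ i, |Δs i| ≤ ε := by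
    intro i
    rw [hΔs i, abs_mul, abs_of_nonneg hε]
    rcases Real.sign_apply_eq (-2 * r * w i) with h | h | h <;> rw [h] <;> simp <;> nlinarith
  -- key: w i * Δs i = - sign r * (ε * |w i|)
  have hkey : ∀ i, w i * Δs i = -Real.sign r * (ε * |w i|) := by
    intro i
    rw [hΔs i]
    rcases hr0.lt_or_gt with hrn | hrp
    · rw [Real.sign_of_neg hrn]
      rcases lt_trichotomy (w i) 0 with hw | hw | hw
      · rw [show -2 * r * w i = -(2 * r * w i) by ring,
          Real.sign_of_neg (by nlinarith), abs_of_neg hw]; ring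
      · simp [hw]
      · rw [show -2 * r * w i = -(2 * r * w i) by ring,
          Real.sign_of_pos (by nlinarith), abs_of_pos hw]; ring
    · rw [Real.sign_of_pos hrp]
      rcases lt_trichotomy (w i) 0 with hw | hw | hw
      · rw [show -2 * r * w i = -(2 * r * w i) by ring,
          Real.sign_of_pos (by nlinarith), abs_of_neg hw]; ring
      · simp [hw]
      · rw [show -2 * r * w i = -(2 * r * w i) by ring,
          Real.sign_of_neg (by nlinarith), abs_of_pos hw]; ring
  have hsum : (∑ i, w i * (x i + Δs i) + b)
      = (∑ i, w i * x i + b) + (-Real.sign r) * (ε * ∑ i, |w i|) := by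
    simp only [mul_add, Finset.sum_add_distrib]
    rw [Finset.sum_congr rfl fun i _ => hkey i, ← Finset.mul_sum, ← Finset.mul_sum]
    ring
  have hval : (y - (∑ i, w i * (x i + Δs i) + b)) ^ 2
      = (|r| + ε * ∑ i, |w i|) ^ 2 := by
    rw [hsum, show y - ((∑ i, w i * x i + b) + -Real.sign r * (ε * ∑ i, |w i|))
        = r + Real.sign r * (ε * ∑ i, |w i|) from by rw [hr]; ring]
    rcases hr0.lt_or_gt with hrn | hrp
    · rw [Real.sign_of_neg hrn, abs_of_neg hrn]; ring
    · rw [Real.sign_of_pos hrp, abs_of_pos hrp]; ring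
  refine ⟨?_, hval, ?_⟩
  · rcases isEmpty_or_nonempty (Fin d) with h | h
    · simp [norm_eq_zero.mpr (Subsingleton.elim _ 0)] at *; exact hε
    · rw [pi_norm_le_iff_of_nonneg hε]
      intro i; rw [Real.norm_eq_abs]; exact habs i
  · intro Δ hΔ
    have hb : ∀ i, |Δ i| ≤ ε := fun i => by
      calc |Δ i| = ‖Δ i‖ := rfl
      _ ≤ ‖Δ‖ := norm_le_pi_norm Δ i
      _ ≤ ε := hΔ
    have h1 : |y - (∑ i, w i * (x i + Δ i) + b)| ≤ |r| + ε * ∑ i, |w i| := by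
      have : y - (∑ i, w i * (x i + Δ i) + b) = r - ∑ i, w i * Δ i := by
        rw [hr]; simp [mul_add, Finset.sum_add_distrib]; ring
      rw [this]
      calc |r - ∑ i, w i * Δ i| ≤ |r| + |∑ i, w i * Δ i| := abs_sub _ _
        _ ≤ |r| + ∑ i, |w i * Δ i| := by
            gcongr; exact Finset.abs_sum_le_sum_abs _ _
        _ ≤ |r| + ∑ i, |w i| * ε := by
            gcongr with i
            rw [abs_mul]
            exact mul_le_mul_of_nonneg_left (hb i) (abs_nonneg _)
        _ = |r| + ε * ∑ i, |w i| := by rw [← Finset.sum_mul]; ring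
    rw [hval]
    calc (y - (∑ i, w i * (x i + Δ i) + b)) ^ 2
        = |y - (∑ i, w i * (x i + Δ i) + b)| ^ 2 := (sq_abs _).symm
      _ ≤ (|r| + ε * ∑ i, |w i|) ^ 2 := by
          apply pow_le_pow_left₀ (abs_nonneg _) h1
end

section
/- Let f(x) = ∑_{i=1}^d w_i x_i + b be a linear model on ℝ^d, x ∈ ℝ^d, y ∈ ℝ, let j ≠ k be two coordinates with |w_j| ≤ |w_k|, and let 0 ≤ ε_low ≤ ε. Let M_j be the maximum of the square loss (y - f(x + Δ))² over the box where coordinate j has budget ε_low and every other coordinate has budget ε, and define M_k analogously with the roles of j and k swapped. Then M_j ≥ M_k; and if |w_j| < |w_k| and ε_low < ε, then M_j > M_k. That is, reducing the budget of a less influential coordinate reduces the maximal adversarial loss less than reducing the budget of a more influential coordinate. -/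
theorem max_loss {d : ℕ} (w x : Fin d → ℝ) (b y : ℝ) (e : Fin d → ℝ) (he : ∀ i, 0 ≤ e i) :
    IsGreatest ((fun Δ : Fin d → ℝ => (y - (∑ i, w i * (x i + Δ i) + b)) ^ 2) ''
      {Δ : Fin d → ℝ | ∀ i, |Δ i| ≤ e i})
      ((|y - (∑ i, w i * x i + b)| + ∑ i, e i * |w i|) ^ 2) := by
  set c := y - (∑ i, w i * x i + b) with hc
  have key : ∀ Δ : Fin d → ℝ, y - (∑ i, w i * (x i + Δ i) + b) = c - ∑ i, w i * Δ i := by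
    intro Δ
    have : ∑ i, w i * (x i + Δ i) = (∑ i, w i * x i) + ∑ i, w i * Δ i := by
      rw [← Finset.sum_add_distrib]; exact Finset.sum_congr rfl fun i _ => by ring
    rw [this, hc]; ring
  constructor
  · set s : ℝ := if 0 ≤ c then 1 else -1 with hs
    have hsabs : |s| = 1 := by rw [hs]; split <;> simp
    refine ⟨fun i => -(s * e i * Real.sign (w i)), fun i => ?_, ?_⟩
    · have h1 : |Real.sign (w i)| ≤ 1 := by
        rcases Real.sign_apply_eq (w i) with h | h | h <;> rw [h] <;> norm_num
      calc |(-(s * e i * Real.sign (w i)))| = |s| * e i * |Real.sign (w i)| := by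
            rw [abs_neg, abs_mul, abs_mul, abs_of_nonneg (he i)]
        _ ≤ e i := by
            rw [hsabs, one_mul]
            exact mul_le_of_le_one_right (he i) h1
    · simp only
      rw [key]
      have hsum : ∑ i, w i * -(s * e i * Real.sign (w i)) = -(s * ∑ i, e i * |w i|) := by
        rw [Finset.mul_sum, ← Finset.sum_neg_distrib]
        refine Finset.sum_congr rfl fun i _ => ?_
        have hws : w i * Real.sign (w i) = |w i| := by
          rcases lt_trichotomy (w i) 0 with h | h | h
          · rw [Real.sign_of_neg h, abs_of_neg h]; ring
          · simp [h]
          · rw [Real.sign_of_pos h, abs_of_pos h]; ring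
        calc w i * -(s * e i * Real.sign (w i))
            = -(s * (e i * (w i * Real.sign (w i)))) := by ring
          _ = -(s * (e i * |w i|)) := by rw [hws]
      rw [hsum]
      by_cases h : 0 ≤ c
      · rw [hs]; simp only [if_pos h, abs_of_nonneg h]; ring
      · push_neg at h
        rw [hs]; simp only [if_neg (not_le.mpr h), abs_of_neg h]; ring
  · rintro v ⟨Δ, hΔ, rfl⟩
    simp only
    rw [key]
    have h1 : |c - ∑ i, w i * Δ i| ≤ |c| + ∑ i, e i * |w i| := by
      calc |c - ∑ i, w i * Δ i| ≤ |c| + |∑ i, w i * Δ i| := abs_sub _ _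
        _ ≤ |c| + ∑ i, |w i * Δ i| := by
            gcongr; exact Finset.abs_sum_le_sum_abs _ _
        _ ≤ |c| + ∑ i, e i * |w i| := by
            gcongr with i
            rw [abs_mul]
            calc |w i| * |Δ i| ≤ |w i| * e i := by gcongr; exact hΔ i
              _ = e i * |w i| := mul_comm _ _
    calc (c - ∑ i, w i * Δ i) ^ 2 = |c - ∑ i, w i * Δ i| ^ 2 := (sq_abs _).symm
      _ ≤ (|c| + ∑ i, e i * |w i|) ^ 2 := by
          apply pow_le_pow_left₀ (abs_nonneg _) h1

/-- For coordinates `j ≠ k` with `|w j| ≤ |w k|` and budgets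
`0 ≤ ε_low ≤ ε`, let `M_j` be the maximum of the square loss over the box where
coordinate `j` has budget `ε_low` and all other coordinates budget `ε`, and `M_k`
analogously. Then `M_j ≥ M_k`, strictly if `|w j| < |w k|` and `ε_low < ε`. -/
theorem stmt_15 (d : ℕ) (w x : Fin d → ℝ) (b y : ℝ) (j k : Fin d) (hjk : j ≠ k)
    (hw : |w j| ≤ |w k|) (ε εlow : ℝ) (h0 : 0 ≤ εlow) (hle : εlow ≤ ε)
    (Mj Mk : ℝ)
    (hMj : IsGreatest
      ((fun Δ : Fin d → ℝ => (y - (∑ i, w i * (x i + Δ i) + b)) ^ 2) ''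
        {Δ : Fin d → ℝ | ∀ i, |Δ i| ≤ if i = j then εlow else ε}) Mj)
    (hMk : IsGreatest
      ((fun Δ : Fin d → ℝ => (y - (∑ i, w i * (x i + Δ i) + b)) ^ 2) ''
        {Δ : Fin d → ℝ | ∀ i, |Δ i| ≤ if i = k then εlow else ε}) Mk) :
    Mk ≤ Mj ∧ (|w j| < |w k| → εlow < ε → Mk < Mj) := by
  have hε : 0 ≤ ε := h0.trans hle
  set c := y - (∑ i, w i * x i + b) with hc
  have hej : ∀ i, (0:ℝ) ≤ if i = j then εlow else ε := fun i => by split <;> assumption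
  have hek : ∀ i, (0:ℝ) ≤ if i = k then εlow else ε := fun i => by split <;> assumption
  have hMj' := hMj.unique (max_loss w x b y _ hej)
  have hMk' := hMk.unique (max_loss w x b y _ hek)
  -- compute the sums
  have sum_eq : ∀ m : Fin d, ∑ i, (if i = m then εlow else ε) * |w i|
      = (∑ i, ε * |w i|) + (εlow - ε) * |w m| := by
    intro m
    have : ∀ i ∈ Finset.univ, (if i = m then εlow else ε) * |w i|
        = ε * |w i| + (if i = m then (εlow - ε) * |w m| else 0) := by
      intro i _
      split
      · next h => subst h; ring
      · ring
    rw [Finset.sum_congr rfl this, Finset.sum_add_distrib, Finset.sum_ite_eq' Finset.univ m]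
    simp
  set S := ∑ i, ε * |w i| with hS
  have hAj : Mj = (|c| + (S + (εlow - ε) * |w j|)) ^ 2 := by rw [hMj', sum_eq]
  have hAk : Mk = (|c| + (S + (εlow - ε) * |w k|)) ^ 2 := by rw [hMk', sum_eq]
  have hAknn : 0 ≤ |c| + (S + (εlow - ε) * |w k|) := by
    have h1 : (0:ℝ) ≤ ∑ i, (if i = k then εlow else ε) * |w i| :=
      Finset.sum_nonneg fun i _ => mul_nonneg (hek i) (abs_nonneg _)
    rw [sum_eq] at h1
    have := abs_nonneg c
    linarith
  constructor
  · have hcmp : (εlow - ε) * |w k| ≤ (εlow - ε) * |w j| :=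
      mul_le_mul_of_nonpos_left hw (by linarith)
    rw [hAj, hAk]
    exact pow_le_pow_left₀ hAknn (by linarith) 2
  · intro h1 h2
    have hcmp : (εlow - ε) * |w k| < (εlow - ε) * |w j| :=
      mul_lt_mul_of_neg_left h1 (by linarith)
    rw [hAj, hAk]
    exact pow_lt_pow_left₀ (by linarith) hAknn two_ne_zero
end
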